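/- (Permutation equivariance of a multi-layer GCN.) Let S be an N×N real matrix, P the permutation matrix of a permutation π of {1,…,N}, and Ŝ = Pᵀ S P. For each layer l = 1,…,L let H_l(S) = Σ_{k=0}^{K} h_{l,k} S^k be a graph filter with real coefficients h_{l,k}, and let σ : ℝ → ℝ be applied entrywise (denoted σ̃). Define Φ(S, x) as the composition z⁰ = x, z^{l+1} = σ̃(H_{l+1}(S) z^l), Φ(S,x) = z^L. Then for every x ∈ ℝ^N, Φ(Ŝ, Pᵀ x) = Pᵀ Φ(S, x). -/

import Mathlib

/-!
Conjugating by a permutation matrix only relabels vertices: `Pᵀ S P` and `Pᵀ x` are `S` and `x`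
reindexed along `π⁻¹`. Reindexing is an algebra automorphism of the matrix ring, so it commutes with
every polynomial filter `H_l`, and an entrywise nonlinearity commutes with any relabelling; induction
on the number of layers finishes the argument.
-/

/-- The output of an `L`-layer GCN with shift operator `S`, filter coefficients
`h l k` (layer `l`, tap `k`, each filter being `H_l(S) = Σ_{k=0}^{K} h l k • S^k`),
and entrywise nonlinearity `σ`, via the recursion `z⁰ = x`,
`z^{l+1} = σ̃(H_{l+1}(S) z^l)`. -/
def gcnOutput {N : ℕ} (K : ℕ) (σ : ℝ → ℝ) (S : Matrix (Fin N) (Fin N) ℝ)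
    (h : ℕ → ℕ → ℝ) : ℕ → (Fin N → ℝ) → (Fin N → ℝ)
  | 0, x => x
  | l + 1, x => fun i =>
      σ (((∑ k ∈ Finset.range (K + 1), h (l + 1) k • S ^ k).mulVec
            (gcnOutput K σ S h l x)) i)

namespace Matrix

variable {n R : Type*} [Fintype n] [DecidableEq n]

lemma transpose_permMatrix_mul_mul_permMatrix [NonAssocSemiring R] (π : Equiv.Perm n)
    (S : Matrix n n R) :
    (π.permMatrix R)ᵀ * S * π.permMatrix R = S.submatrix π.symm π.symm := by
  rw [transpose_permMatrix, Equiv.Perm.permMatrix, PEquiv.toMatrix_toPEquiv_mul,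
    Equiv.Perm.permMatrix, PEquiv.mul_toMatrix_toPEquiv, submatrix_submatrix]
  rfl

lemma transpose_permMatrix_mulVec [CommRing R] (π : Equiv.Perm n) (x : n → R) :
    (π.permMatrix R)ᵀ *ᵥ x = x ∘ π.symm := by
  rw [transpose_permMatrix, permMatrix_mulVec]
  rfl

lemma sum_smul_pow_submatrix {m : Type*} [Fintype m] [DecidableEq m] [CommSemiring R]
    (e : m ≃ n) (c : ℕ → R) (s : Finset ℕ) (S : Matrix n n R) :
    ∑ k ∈ s, c k • S.submatrix e e ^ k = (∑ k ∈ s, c k • S ^ k).submatrix e e := by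
  have hreindex : ∀ M : Matrix n n R, reindexAlgEquiv R R e.symm M = M.submatrix e e :=
    fun _ => rfl
  simp only [← hreindex, map_sum, map_smul, map_pow]

end Matrix

lemma gcnOutput_submatrix {N K : ℕ} (σ : ℝ → ℝ) (S : Matrix (Fin N) (Fin N) ℝ)
    (h : ℕ → ℕ → ℝ) (e : Equiv.Perm (Fin N)) (L : ℕ) (x : Fin N → ℝ) :
    gcnOutput K σ (S.submatrix e e) h L (x ∘ e) = gcnOutput K σ S h L x ∘ e := by
  induction L with
  | zero => rfl
  | succ L ih =>
    funext i
    simp only [gcnOutput, ih, Matrix.sum_smul_pow_submatrix, Matrix.submatrix_mulVec_equiv,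
      Function.comp_assoc, Equiv.self_comp_symm, Function.comp_id, Function.comp_apply]

/-- **Permutation equivariance of a multi-layer GCN.**
With P the permutation matrix of π and Ŝ = Pᵀ S P, the L-layer GCN
Φ(S, x) satisfies Φ(Ŝ, Pᵀ x) = Pᵀ Φ(S, x). -/
theorem gcn_permutation_equivariant {N K L : ℕ}
    (S : Matrix (Fin N) (Fin N) ℝ) (π : Equiv.Perm (Fin N))
    (h : ℕ → ℕ → ℝ) (σ : ℝ → ℝ) (x : Fin N → ℝ) :
    gcnOutput K σ ((π.permMatrix ℝ).transpose * S * π.permMatrix ℝ) h L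
        ((π.permMatrix ℝ).transpose.mulVec x) =
      (π.permMatrix ℝ).transpose.mulVec (gcnOutput K σ S h L x) := by
  rw [Matrix.transpose_permMatrix_mul_mul_permMatrix, Matrix.transpose_permMatrix_mulVec,
    Matrix.transpose_permMatrix_mulVec]
  exact gcnOutput_submatrix σ S h π.symm L x
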